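/- Let η ∈ (0, 1) and B_1, …, B_H > 0, and let r_h : X_h × A → [−B_h, B_h] for h ∈ [H] be reward functions in a finite low-rank MDP of dimension d satisfying the normalization assumptions. Extend each r_h to the extended MDP by setting r̄_h(x, a) := r_h(x, a) for (x, a) ∈ X_h × A and r̄_h(x, a) := 0 whenever x is a terminal state or a = 𝔞. Then the cost of truncation is bounded: sup_{π∈Π̄_η} Ē^π[Σ_{h=1}^H r̄_h(x_h, a_h)] ≥ sup_{π∈Π̄} Ē^π[Σ_{h=1}^H r̄_h(x_h, a_h)] − 2·H·d^{3/2}·η·Σ_{h=1}^H B_h. -/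

import Mathlib

open scoped BigOperators RealInnerProductSpace

universe u v

variable {X : ℕ → Type u} {A : Type v} [∀ k, Fintype (X k)] [Fintype A] [DecidableEq A]

noncomputable def occ (ρ : X 0 → ℝ) (T : ∀ k, X k → A → X (k + 1) → ℝ)
    (π : ∀ k, X k → A → ℝ) : ∀ k, X k → ℝ
  | 0, x => ρ x
  | k + 1, x' => ∑ x : X k, ∑ a : A, occ ρ T π k x * π k x a * T k x a x'

def IsPolicy (π : ∀ k, X k → A → ℝ) : Prop :=
  ∀ (k : ℕ) (x : X k), (∀ a, 0 ≤ π k x a) ∧ (∑ a : A, π k x a = 1)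

def IsInit (ρ : X 0 → ℝ) : Prop :=
  (∀ x, 0 ≤ ρ x) ∧ (∑ x : X 0, ρ x = 1)

/-- Transition kernel of the extended MDP `M̄`: states `X k ⊕ Unit` (with `Sum.inr ()` the
terminal state `t_{k+1}`), actions `A ⊕ Unit` (with `Sum.inr ()` the terminal action `𝔞`).
The terminal action from any state, and any action from a terminal state, lead
deterministically to the next terminal state; all other transitions are as in `T`. -/
noncomputable def Tb (T : ∀ k, X k → A → X (k + 1) → ℝ) :
    ∀ k, (X k ⊕ Unit) → (A ⊕ Unit) → (X (k + 1) ⊕ Unit) → ℝ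
  | k, Sum.inl x, Sum.inl a, Sum.inl x' => T k x a x'
  | _, Sum.inl _, Sum.inl _, Sum.inr _ => 0
  | _, Sum.inl _, Sum.inr _, Sum.inl _ => 0
  | _, Sum.inl _, Sum.inr _, Sum.inr _ => 1
  | _, Sum.inr _, _, Sum.inl _ => 0
  | _, Sum.inr _, _, Sum.inr _ => 1

/-- Initial distribution of the extended MDP (terminal states have zero mass). -/
def ρb (ρ : X 0 → ℝ) : (X 0 ⊕ Unit) → ℝ := Sum.elim ρ fun _ => 0

/-- A Markov policy of the extended MDP; by convention it takes the terminal action at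
terminal states. -/
def IsExtPolicy (π : ∀ k, (X k ⊕ Unit) → (A ⊕ Unit) → ℝ) : Prop :=
  (∀ (k : ℕ) (x : X k ⊕ Unit), (∀ a, 0 ≤ π k x a) ∧ (∑ a, π k x a = 1)) ∧
  (∀ k : ℕ, π k (Sum.inr ()) (Sum.inr ()) = 1)

/-- Occupancy measure `d̄^π` in the extended MDP. -/
noncomputable def occb (ρ : X 0 → ℝ) (T : ∀ k, X k → A → X (k + 1) → ℝ)
    (π : ∀ k, (X k ⊕ Unit) → (A ⊕ Unit) → ℝ) (k : ℕ) (x : X k ⊕ Unit) : ℝ :=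
  occ (X := fun k => X k ⊕ Unit) (A := A ⊕ Unit) (ρb ρ) (Tb T) π k x

/-- Extended feature map `μ̄` in `ℝ^{d+1}`: `μ̄(x) = (μ(x), 0)` for original states and
`μ̄(t) = e_{d+1}` for terminal states. -/
noncomputable def muExt (d : ℕ) (μ : ∀ k, X k → EuclideanSpace ℝ (Fin d)) (k : ℕ) :
    (X k ⊕ Unit) → EuclideanSpace ℝ (Fin (d + 1))
  | Sum.inl x => WithLp.toLp 2 (fun i : Fin (d + 1) => if hi : (i : ℕ) < d then μ k x ⟨i, hi⟩ else 0)
  | Sum.inr _ => WithLp.toLp 2 (fun i : Fin (d + 1) => if (i : ℕ) = d then 1 else 0)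

/-- The `η`-reachable states at (0-indexed) layer `k` relative to a set `P` of extended
policies; by convention every state of layer `0` is reachable. -/
noncomputable def reachSet (d : ℕ) (ρ : X 0 → ℝ) (T : ∀ k, X k → A → X (k + 1) → ℝ)
    (μ : ∀ k, X k → EuclideanSpace ℝ (Fin d)) (η : ℝ)
    (P : Set (∀ k, (X k ⊕ Unit) → (A ⊕ Unit) → ℝ)) : ∀ k : ℕ, Set (X k)
  | 0 => Set.univ
  | k + 1 => {x | η * ‖muExt d μ (k + 1) (Sum.inl x)‖ ≤
      ⨆ π : P, occb ρ T π.1 (k + 1) (Sum.inl x)}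

/-- The truncated policy classes `Π̄_{n,η}`: `trunc … n` is the paper's `Π̄_{n,η}`, where the
truncation at stage `n + 1` replaces the action by the terminal action at every
(0-indexed) layer-`n` state that is not `η`-reachable relative to `Π̄_{n,η}`, leaving the
policy unchanged everywhere else.  `Π̄_η = trunc … H`. -/
noncomputable def trunc (d : ℕ) (ρ : X 0 → ℝ) (T : ∀ k, X k → A → X (k + 1) → ℝ)
    (μ : ∀ k, X k → EuclideanSpace ℝ (Fin d)) (η : ℝ) :
    ℕ → Set (∀ k, (X k ⊕ Unit) → (A ⊕ Unit) → ℝ)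
  | 0 => {π | IsExtPolicy π}
  | n + 1 => {π | ∃ π' ∈ trunc d ρ T μ η n,
      (∀ m, m ≠ n → π m = π' m) ∧
      (∀ x : X n, x ∈ reachSet d ρ T μ η (trunc d ρ T μ η n) n →
        π n (Sum.inl x) = π' n (Sum.inl x)) ∧
      (∀ x : X n, x ∉ reachSet d ρ T μ η (trunc d ρ T μ η n) n →
        ∀ a, π n (Sum.inl x) a = if a = Sum.inr () then 1 else 0) ∧
      π n (Sum.inr ()) = π' n (Sum.inr ())}

/-- A policy of the original MDP viewed as a policy of the extended MDP (it never takes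
the terminal action at original states). -/
def embed (π : ∀ k, X k → A → ℝ) : ∀ k, (X k ⊕ Unit) → (A ⊕ Unit) → ℝ
  | k, Sum.inl x, Sum.inl a => π k x a
  | _, Sum.inl _, Sum.inr _ => 0
  | _, Sum.inr _, Sum.inl _ => 0
  | _, Sum.inr _, Sum.inr _ => 1

/-- The extension `r̄` of reward functions `r` to the extended MDP: `r̄` agrees with `r` on
original state-action pairs and vanishes at terminal states and on the terminal action. -/
def rExt (r : ∀ k, X k → A → ℝ) : ∀ k, (X k ⊕ Unit) → (A ⊕ Unit) → ℝ
  | k, Sum.inl x, Sum.inl a => r k x a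
  | _, Sum.inl _, Sum.inr _ => 0
  | _, Sum.inr _, _ => 0

/-- `Ē^π[Σ_{k<H} r̄_k(x_k, a_k)]`, the expected total extended reward of an extended
policy `π` over layers `0, …, H-1`. -/
noncomputable def valueExt (H : ℕ) (ρ : X 0 → ℝ) (T : ∀ k, X k → A → X (k + 1) → ℝ)
    (r : ∀ k, X k → A → ℝ) (π : ∀ k, (X k ⊕ Unit) → (A ⊕ Unit) → ℝ) : ℝ :=
  ∑ k ∈ Finset.range H, ∑ x : X k ⊕ Unit, ∑ a : A ⊕ Unit,
    occb ρ T π k x * π k x a * rExt r k x a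

/-!
Truncating a policy at layer `n` (sending every unreachable state of that layer to the terminal
action) only removes occupancy mass: from layer `n` on, the state-action occupancy of the
truncated policy is dominated by that of the original one, and the total deficit never exceeds
the mass `δ` the original policy puts on unreachable layer-`n` states. Hence each truncation
step costs at most `δ Σ_k B_k` in value. An unreachable state has occupancy below `η ‖μ(x)‖`
under every policy of the current class, and the normalization of `μ`, tested on the sign
patterns of each coordinate, gives `Σ_x ‖μ(x)‖ ≤ 2 d √d`; so `δ ≤ 2 η d^{3/2}`, and the `H`
truncation steps cost at most `2 H d^{3/2} η Σ_k B_k`.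
-/

theorem EuclideanSpace.norm_le_sum_abs {ι : Type*} [Fintype ι] [DecidableEq ι]
    (v : EuclideanSpace ℝ ι) : ‖v‖ ≤ ∑ i, |v i| :=
  calc ‖v‖ = ‖∑ i, EuclideanSpace.single i (v i)‖ := by
        congr 1
        ext j
        simp [WithLp.ofLp_sum]
    _ ≤ ∑ i, |v i| := (norm_sum_le _ _).trans (by simp)

theorem EuclideanSpace.sum_norm_le_of_norm_sum_smul_le {Y : Type*} [Fintype Y] {d : ℕ}
    (m : Y → EuclideanSpace ℝ (Fin d)) {c : ℝ}
    (hm : ∀ g : Y → ℝ, (∀ y, g y ∈ Set.Icc (0 : ℝ) 1) → ‖∑ y, g y • m y‖ ≤ c) :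
    ∑ y, ‖m y‖ ≤ 2 * d * c := by
  have hcoord : ∀ i, ∑ y, |m y i| ≤ 2 * c := by
    intro i
    set g : Y → ℝ := fun y => if 0 ≤ m y i then 1 else 0
    have hg : ∀ y, g y ∈ Set.Icc (0 : ℝ) 1 := fun y => by
      simp only [g]; split_ifs <;> norm_num
    have hg' : ∀ y, 1 - g y ∈ Set.Icc (0 : ℝ) 1 := fun y => by
      simp only [g]; split_ifs <;> norm_num
    have hsplit : ∑ y, |m y i| = (∑ y, g y • m y) i - (∑ y, (1 - g y) • m y) i := by
      simp only [WithLp.ofLp_sum, Finset.sum_apply, PiLp.smul_apply, smul_eq_mul,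
        ← Finset.sum_sub_distrib]
      refine Finset.sum_congr rfl fun y _ => ?_
      simp only [g]
      split_ifs with h
      · simp [abs_of_nonneg h]
      · simp [abs_of_neg (not_le.1 h)]
    rw [hsplit]
    linarith [(le_abs_self _).trans ((PiLp.norm_apply_le _ i).trans (hm g hg)),
      (neg_le_abs _).trans ((PiLp.norm_apply_le _ i).trans (hm _ hg'))]
  calc ∑ y, ‖m y‖ ≤ ∑ y, ∑ i, |m y i| :=
        Finset.sum_le_sum fun y _ => EuclideanSpace.norm_le_sum_abs (m y)
    _ = ∑ i, ∑ y, |m y i| := Finset.sum_comm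
    _ ≤ ∑ _i : Fin d, 2 * c := Finset.sum_le_sum fun i _ => hcoord i
    _ = 2 * d * c := by simp [mul_comm, mul_left_comm]

section Occupancy

omit [DecidableEq A]

section Generic

variable (ρ : X 0 → ℝ) (T : ∀ k, X k → A → X (k + 1) → ℝ)

theorem occ_congr {π π' : ∀ k, X k → A → ℝ} :
    ∀ {k : ℕ}, (∀ j < k, π j = π' j) → occ ρ T π k = occ ρ T π' k
  | 0, _ => rfl
  | k + 1, h => by
    funext x'
    simp only [occ, occ_congr fun j hj => h j (Nat.lt_succ_of_lt hj), h k (Nat.lt_succ_self k)]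

theorem occ_nonneg {π : ∀ k, X k → A → ℝ} (hρ : ∀ x, 0 ≤ ρ x) (hπ : ∀ j x a, 0 ≤ π j x a) :
    ∀ {k : ℕ}, (∀ j < k, ∀ x a x', 0 ≤ T j x a x') → ∀ x, 0 ≤ occ ρ T π k x
  | 0, _, x => hρ x
  | k + 1, hT, x' => by
    have ih := occ_nonneg hρ hπ fun j hj => hT j (Nat.lt_succ_of_lt hj)
    exact Finset.sum_nonneg fun x _ => Finset.sum_nonneg fun a _ =>
      mul_nonneg (mul_nonneg (ih x) (hπ k x a)) (hT k (Nat.lt_succ_self k) x a x')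

theorem sum_occ {π : ∀ k, X k → A → ℝ} (hρ : ∑ x, ρ x = 1) (hπ : ∀ j x, ∑ a, π j x a = 1) :
    ∀ {k : ℕ}, (∀ j < k, ∀ x a, ∑ x', T j x a x' = 1) → ∑ x, occ ρ T π k x = 1
  | 0, _ => hρ
  | k + 1, hT => by
    calc ∑ x', occ ρ T π (k + 1) x'
        = ∑ x, ∑ a, occ ρ T π k x * π k x a * ∑ x', T k x a x' := by
          simp only [occ, Finset.mul_sum]
          rw [Finset.sum_comm]
          exact Finset.sum_congr rfl fun _ _ => Finset.sum_comm
      _ = ∑ x, occ ρ T π k x := by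
          simp only [hT k (Nat.lt_succ_self k), mul_one, ← Finset.mul_sum, hπ]
      _ = 1 := sum_occ hρ hπ fun j hj => hT j (Nat.lt_succ_of_lt hj)

end Generic

/-- `T` is a Markov kernel at each of the `H - 1` transitions of a horizon-`H` episode. -/
def IsStochastic (H : ℕ) (T : ∀ k, X k → A → X (k + 1) → ℝ) : Prop :=
  ∀ k, k + 2 ≤ H → ∀ (x : X k) (a : A), (∀ x', 0 ≤ T k x a x') ∧ (∑ x', T k x a x' = 1)

def IsNormalized (H : ℕ) {d : ℕ} (μ : ∀ k, X k → EuclideanSpace ℝ (Fin d)) : Prop :=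
  ∀ k, k + 2 ≤ H → ∀ g : X (k + 1) → ℝ, (∀ x', g x' ∈ Set.Icc (0 : ℝ) 1) →
    ‖∑ x', g x' • μ (k + 1) x'‖ ≤ Real.sqrt d

variable {H : ℕ} {ρ : X 0 → ℝ} {T : ∀ k, X k → A → X (k + 1) → ℝ}
  {π π' : ∀ k, (X k ⊕ Unit) → (A ⊕ Unit) → ℝ}

theorem occb_nonneg (hρ : IsInit ρ) (hT : IsStochastic H T) (hπ : IsExtPolicy π) {k : ℕ}
    (hk : k < H) (x : X k ⊕ Unit) : 0 ≤ occb ρ T π k x := by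
  have hTb : ∀ j < k, ∀ x a x', 0 ≤ Tb T j x a x' := by
    rintro j hj (x | _) (a | _) (x' | _) <;> simp [Tb, (hT j (by omega) _ _).1]
  refine occ_nonneg _ _ ?_ (fun j x a => (hπ.1 j x).1 a) hTb x
  rintro (x₀ | _)
  exacts [hρ.1 x₀, le_rfl]

theorem sum_occb (hρ : IsInit ρ) (hT : IsStochastic H T) (hπ : IsExtPolicy π) {k : ℕ}
    (hk : k < H) : ∑ x, occb ρ T π k x = 1 := by
  have hTb : ∀ j < k, ∀ x a, ∑ x', Tb T j x a x' = 1 := by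
    rintro j hj (x | _) (a | _) <;> simp [Tb, Fintype.sum_sum_type, (hT j (by omega) _ _).2]
  exact sum_occ _ _ (by simpa [ρb, Fintype.sum_sum_type] using hρ.2) (fun j x => (hπ.1 j x).2) hTb

theorem occb_le_one (hρ : IsInit ρ) (hT : IsStochastic H T) (hπ : IsExtPolicy π) {k : ℕ}
    (hk : k < H) (x : X k ⊕ Unit) : occb ρ T π k x ≤ 1 :=
  sum_occb hρ hT hπ hk ▸
    Finset.single_le_sum (fun y _ => occb_nonneg hρ hT hπ hk y) (Finset.mem_univ x)

omit [∀ k, Fintype (X k)] in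
theorem IsExtPolicy.sum_inl_le_one (hπ : IsExtPolicy π) (k : ℕ) (x : X k ⊕ Unit) :
    ∑ a : A, π k x (Sum.inl a) ≤ 1 := by
  have h := (hπ.1 k x).2
  simp only [Fintype.sum_sum_type, Finset.univ_unique, Finset.sum_singleton] at h
  linarith [(hπ.1 k x).1 (Sum.inr ())]

variable (ρ T) in
/-- Occupancy of the original state-action pair `(x, a)` at layer `k` of the extended MDP. -/
noncomputable def occbSA (π : ∀ k, (X k ⊕ Unit) → (A ⊕ Unit) → ℝ) (k : ℕ) (x : X k) (a : A) :
    ℝ :=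
  occb ρ T π k (Sum.inl x) * π k (Sum.inl x) (Sum.inl a)

theorem occbSA_nonneg (hρ : IsInit ρ) (hT : IsStochastic H T) (hπ : IsExtPolicy π) {k : ℕ}
    (hk : k < H) (x : X k) (a : A) : 0 ≤ occbSA ρ T π k x a :=
  mul_nonneg (occb_nonneg hρ hT hπ hk _) ((hπ.1 k _).1 _)

theorem sum_occbSA_le (hρ : IsInit ρ) (hT : IsStochastic H T) (hπ : IsExtPolicy π) {k : ℕ}
    (hk : k < H) (x : X k) : ∑ a, occbSA ρ T π k x a ≤ occb ρ T π k (Sum.inl x) := by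
  simp only [occbSA, ← Finset.mul_sum]
  exact mul_le_of_le_one_right (occb_nonneg hρ hT hπ hk _) (hπ.sum_inl_le_one k _)

theorem sum_sum_occbSA_le_one (hρ : IsInit ρ) (hT : IsStochastic H T) (hπ : IsExtPolicy π)
    {k : ℕ} (hk : k < H) : ∑ x, ∑ a, occbSA ρ T π k x a ≤ 1 :=
  calc ∑ x, ∑ a, occbSA ρ T π k x a ≤ ∑ x, occb ρ T π k x := by
        rw [Fintype.sum_sum_type]
        exact le_add_of_le_of_nonneg (Finset.sum_le_sum fun x _ => sum_occbSA_le hρ hT hπ hk x)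
          (Finset.sum_nonneg fun _ _ => occb_nonneg hρ hT hπ hk _)
    _ = 1 := sum_occb hρ hT hπ hk

theorem occb_succ_inl (k : ℕ) (x' : X (k + 1)) :
    occb ρ T π (k + 1) (Sum.inl x') = ∑ x, ∑ a, occbSA ρ T π k x a * T k x a x' := by
  simp [occb, occ, occbSA, Tb, Fintype.sum_sum_type]

theorem valueExt_eq_sum_occbSA (r : ∀ k, X k → A → ℝ) :
    valueExt H ρ T r π = ∑ k ∈ Finset.range H, ∑ x, ∑ a, occbSA ρ T π k x a * r k x a := by
  simp [valueExt, occbSA, rExt, Fintype.sum_sum_type]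

def IsMassLE {Y : Type*} [Fintype Y] (W : Y → A → ℝ) (c : ℝ) : Prop :=
  (∀ x a, 0 ≤ W x a) ∧ ∑ x, ∑ a, W x a ≤ c

theorem sum_weighted_reward_le {B : ℕ → ℝ} (hB : ∀ k < H, 0 ≤ B k) {r : ∀ k, X k → A → ℝ}
    (hr : ∀ k < H, ∀ x a, |r k x a| ≤ B k) {W : ∀ k, X k → A → ℝ} {c : ℝ}
    (hW : ∀ k < H, IsMassLE (W k) c) :
    ∑ k ∈ Finset.range H, ∑ x, ∑ a, W k x a * r k x a ≤ c * ∑ k ∈ Finset.range H, B k := by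
  rw [Finset.mul_sum]
  refine Finset.sum_le_sum fun k hk => ?_
  obtain ⟨hW0, hWc⟩ := hW k (Finset.mem_range.1 hk)
  calc ∑ x, ∑ a, W k x a * r k x a ≤ ∑ x, ∑ a, W k x a * B k := by
        gcongr with x _ a _
        · exact hW0 x a
        · exact (le_abs_self _).trans (hr k (Finset.mem_range.1 hk) x a)
    _ = (∑ x, ∑ a, W k x a) * B k := by simp only [Finset.sum_mul]
    _ ≤ c * B k := mul_le_mul_of_nonneg_right hWc (hB k (Finset.mem_range.1 hk))

theorem valueExt_le (hρ : IsInit ρ) (hT : IsStochastic H T) (hπ : IsExtPolicy π)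
    {B : ℕ → ℝ} (hB : ∀ k < H, 0 ≤ B k) {r : ∀ k, X k → A → ℝ}
    (hr : ∀ k < H, ∀ x a, |r k x a| ≤ B k) :
    valueExt H ρ T r π ≤ ∑ k ∈ Finset.range H, B k := by
  rw [valueExt_eq_sum_occbSA, ← one_mul (∑ k ∈ Finset.range H, B k)]
  exact sum_weighted_reward_le hB hr fun k hk =>
    ⟨occbSA_nonneg hρ hT hπ hk, sum_sum_occbSA_le_one hρ hT hπ hk⟩

theorem occbSA_sub_occbSA_succ {k : ℕ} (h : π (k + 1) = π' (k + 1)) (x' : X (k + 1))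
    (a' : A) : occbSA ρ T π (k + 1) x' a' - occbSA ρ T π' (k + 1) x' a' =
      (∑ x, ∑ a, (occbSA ρ T π k x a - occbSA ρ T π' k x a) * T k x a x') *
        π (k + 1) (Sum.inl x') (Sum.inl a') := by
  rw [occbSA, occbSA, occb_succ_inl, occb_succ_inl, h, ← sub_mul]
  simp only [sub_mul, Finset.sum_sub_distrib]

theorem IsMassLE.occbSA_sub_succ {k : ℕ} {δ : ℝ} (hπ : IsExtPolicy π)
    (hTk : ∀ x a, (∀ x', 0 ≤ T k x a x') ∧ ∑ x', T k x a x' = 1) (h : π (k + 1) = π' (k + 1))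
    (hD : IsMassLE (fun x a => occbSA ρ T π k x a - occbSA ρ T π' k x a) δ) :
    IsMassLE (fun x a => occbSA ρ T π (k + 1) x a - occbSA ρ T π' (k + 1) x a) δ := by
  set D := fun x a => occbSA ρ T π k x a - occbSA ρ T π' k x a
  have hmass : ∀ x', 0 ≤ ∑ x, ∑ a, D x a * T k x a x' := fun x' =>
    Finset.sum_nonneg fun x _ => Finset.sum_nonneg fun a _ => mul_nonneg (hD.1 x a) ((hTk x a).1 x')
  simp only [IsMassLE, occbSA_sub_occbSA_succ h]
  refine ⟨fun x' a' => mul_nonneg (hmass x') ((hπ.1 _ _).1 _), ?_⟩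
  calc ∑ x', ∑ a', (∑ x, ∑ a, D x a * T k x a x') * π (k + 1) (Sum.inl x') (Sum.inl a')
      ≤ ∑ x', ∑ x, ∑ a, D x a * T k x a x' := Finset.sum_le_sum fun x' _ => by
        rw [← Finset.mul_sum]
        exact mul_le_of_le_one_right (hmass x') (hπ.sum_inl_le_one _ _)
    _ = ∑ x, ∑ a, D x a := by
        rw [Finset.sum_comm]
        refine Finset.sum_congr rfl fun x _ => ?_
        rw [Finset.sum_comm]
        simp only [← Finset.mul_sum, (hTk x _).2, mul_one]
    _ ≤ δ := hD.2

variable (ρ T) in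
noncomputable def massOutside (π : ∀ k, (X k ⊕ Unit) → (A ⊕ Unit) → ℝ) (n : ℕ) (R : Set (X n)) :
    ℝ :=
  ∑ x, Rᶜ.indicator (fun x => occb ρ T π n (Sum.inl x)) x

theorem massOutside_nonneg {n : ℕ} {R : Set (X n)} (hρ : IsInit ρ) (hT : IsStochastic H T)
    (hπ : IsExtPolicy π) (hn : n < H) : 0 ≤ massOutside ρ T π n R :=
  Finset.sum_nonneg fun _ _ => Set.indicator_nonneg (fun _ _ => occb_nonneg hρ hT hπ hn _) _

end Occupancy

section Truncation

omit [∀ k, Fintype (X k)] in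
theorem nonempty_isExtPolicy : Nonempty {π : ∀ k, (X k ⊕ Unit) → (A ⊕ Unit) → ℝ | IsExtPolicy π} :=
  ⟨⟨fun _ _ a => if a = Sum.inr () then 1 else 0,
    fun _ _ => ⟨fun _ => ite_nonneg zero_le_one le_rfl, by simp⟩, fun _ => by simp⟩⟩

variable {d : ℕ} {ρ : X 0 → ℝ} {T : ∀ k, X k → A → X (k + 1) → ℝ}
  {μ : ∀ k, X k → EuclideanSpace ℝ (Fin d)} {η : ℝ} {π : ∀ k, (X k ⊕ Unit) → (A ⊕ Unit) → ℝ}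

open Classical in
noncomputable def truncAt (n : ℕ) (R : Set (X n)) (π : ∀ k, (X k ⊕ Unit) → (A ⊕ Unit) → ℝ) :
    ∀ k, (X k ⊕ Unit) → (A ⊕ Unit) → ℝ :=
  Function.update π n fun x a =>
    match x with
    | Sum.inl x₀ => if x₀ ∈ R then π n x a else if a = Sum.inr () then 1 else 0
    | Sum.inr _ => π n x a

variable {n : ℕ} {R : Set (X n)}

omit [∀ k, Fintype (X k)] [Fintype A] in
theorem truncAt_of_ne {k : ℕ} (h : k ≠ n) : truncAt n R π k = π k :=
  Function.update_of_ne h _ _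

omit [∀ k, Fintype (X k)] [Fintype A] in
theorem truncAt_inr : truncAt n R π n (Sum.inr ()) = π n (Sum.inr ()) := by
  simp [truncAt]

omit [∀ k, Fintype (X k)] [Fintype A] in
theorem truncAt_inl_of_mem {x : X n} (hx : x ∈ R) :
    truncAt n R π n (Sum.inl x) = π n (Sum.inl x) := by
  funext a
  simp [truncAt, hx]

omit [∀ k, Fintype (X k)] [Fintype A] in
theorem truncAt_inl_of_notMem {x : X n} (hx : x ∉ R) (a : A ⊕ Unit) :
    truncAt n R π n (Sum.inl x) a = if a = Sum.inr () then 1 else 0 := by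
  simp [truncAt, hx]

omit [∀ k, Fintype (X k)] in
theorem IsExtPolicy.truncAt (hπ : IsExtPolicy π) : IsExtPolicy (truncAt n R π) := by
  refine ⟨fun k x => ?_, fun k => ?_⟩
  · rcases eq_or_ne k n with rfl | hk
    · rcases x with x | ⟨⟩
      · by_cases hx : x ∈ R
        · rw [truncAt_inl_of_mem hx]
          exact hπ.1 k _
        · simp only [truncAt_inl_of_notMem hx]
          exact ⟨fun a => by split_ifs <;> norm_num, by simp⟩
      · rw [truncAt_inr]
        exact hπ.1 k _
    · rw [truncAt_of_ne hk]
      exact hπ.1 k x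
  · rcases eq_or_ne k n with rfl | hk
    · rw [truncAt_inr]
      exact hπ.2 k
    · rw [truncAt_of_ne hk]
      exact hπ.2 k

theorem trunc_succ : trunc d ρ T μ η (n + 1) =
    truncAt n (reachSet d ρ T μ η (trunc d ρ T μ η n) n) '' trunc d ρ T μ η n := by
  ext π
  constructor
  · rintro ⟨π', hπ', hne, hmem, hnotMem, hinr⟩
    refine ⟨π', hπ', funext fun k => ?_⟩
    rcases eq_or_ne k n with rfl | hk
    · funext x
      rcases x with x | ⟨⟩
      · by_cases hx : x ∈ reachSet d ρ T μ η (trunc d ρ T μ η k) k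
        · rw [truncAt_inl_of_mem hx, hmem x hx]
        · funext a
          rw [truncAt_inl_of_notMem hx, hnotMem x hx]
      · rw [truncAt_inr, hinr]
    · rw [truncAt_of_ne hk, hne k hk]
  · rintro ⟨π', hπ', rfl⟩
    exact ⟨π', hπ', fun _ hm => truncAt_of_ne hm, fun _ hx => truncAt_inl_of_mem hx,
      fun _ hx => truncAt_inl_of_notMem hx, truncAt_inr⟩

theorem isExtPolicy_of_mem_trunc : ∀ {n : ℕ} {π}, π ∈ trunc d ρ T μ η n → IsExtPolicy π
  | 0, _, h => h
  | n + 1, _, h => by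
    rw [trunc_succ] at h
    obtain ⟨π', hπ', rfl⟩ := h
    exact (isExtPolicy_of_mem_trunc hπ').truncAt

end Truncation

section TruncationLoss

variable {H : ℕ} {ρ : X 0 → ℝ} {T : ∀ k, X k → A → X (k + 1) → ℝ}
  {π : ∀ k, (X k ⊕ Unit) → (A ⊕ Unit) → ℝ} {n : ℕ} {R : Set (X n)}

theorem occb_truncAt_of_le {k : ℕ} (hk : k ≤ n) :
    occb ρ T (truncAt n R π) k = occb ρ T π k :=
  occ_congr (π := truncAt n R π) (π' := π) _ _ fun _ hj => truncAt_of_ne (hj.trans_le hk).ne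

theorem occbSA_sub_occbSA_truncAt_self (x : X n) (a : A) :
    occbSA ρ T π n x a - occbSA ρ T (truncAt n R π) n x a =
      Rᶜ.indicator (fun x => occbSA ρ T π n x a) x := by
  rw [occbSA, occbSA, occb_truncAt_of_le le_rfl]
  by_cases hx : x ∈ R
  · simp [truncAt_inl_of_mem hx, hx]
  · simp [occbSA, truncAt_inl_of_notMem hx, hx]

theorem isMassLE_occbSA_sub_occbSA_truncAt (hρ : IsInit ρ) (hT : IsStochastic H T)
    (hπ : IsExtPolicy π) (hn : n < H) {k : ℕ} (hk : k < H) :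
    IsMassLE (fun x a => occbSA ρ T π k x a - occbSA ρ T (truncAt n R π) k x a)
      (massOutside ρ T π n R) := by
  rcases lt_or_ge k n with hkn | hnk
  · have hocc : occb ρ T (truncAt n R π) k = occb ρ T π k := occb_truncAt_of_le hkn.le
    simp only [occbSA, hocc, truncAt_of_ne hkn.ne, sub_self]
    exact ⟨fun _ _ => le_rfl, by simpa using massOutside_nonneg hρ hT hπ hn⟩
  induction k, hnk using Nat.le_induction with
  | base =>
    simp only [IsMassLE, occbSA_sub_occbSA_truncAt_self, massOutside]
    refine ⟨fun x a => Set.indicator_nonneg (fun x _ => occbSA_nonneg hρ hT hπ hn x a) x,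
      Finset.sum_le_sum fun x _ => ?_⟩
    by_cases hx : x ∈ R
    · simp [hx]
    · simpa [hx] using sum_occbSA_le hρ hT hπ hn x
  | succ k hnk ih =>
    exact (ih (by omega)).occbSA_sub_succ hπ (hT k (by omega)) (truncAt_of_ne (by omega)).symm

theorem valueExt_sub_valueExt_truncAt_le (hρ : IsInit ρ) (hT : IsStochastic H T)
    (hπ : IsExtPolicy π) (hn : n < H) {B : ℕ → ℝ} (hB : ∀ k < H, 0 ≤ B k)
    {r : ∀ k, X k → A → ℝ} (hr : ∀ k < H, ∀ x a, |r k x a| ≤ B k) :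
    valueExt H ρ T r π - valueExt H ρ T r (truncAt n R π) ≤
      massOutside ρ T π n R * ∑ k ∈ Finset.range H, B k := by
  simp only [valueExt_eq_sum_occbSA, ← Finset.sum_sub_distrib, ← sub_mul]
  exact sum_weighted_reward_le hB hr fun k hk =>
    isMassLE_occbSA_sub_occbSA_truncAt hρ hT hπ hn hk

end TruncationLoss

section Reachability

variable {H d : ℕ} {ρ : X 0 → ℝ} {T : ∀ k, X k → A → X (k + 1) → ℝ}
  {μ : ∀ k, X k → EuclideanSpace ℝ (Fin d)} {η : ℝ} {π : ∀ k, (X k ⊕ Unit) → (A ⊕ Unit) → ℝ}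
  {n : ℕ}

omit [∀ k, Fintype (X k)] [Fintype A] [DecidableEq A] in
theorem norm_muExt_inl (k : ℕ) (x : X k) : ‖muExt d μ k (Sum.inl x)‖ = ‖μ k x‖ := by
  simp [EuclideanSpace.norm_eq, muExt, Fin.sum_univ_castSucc]

omit [DecidableEq A] in
theorem occb_lt_of_notMem_reachSet (hρ : IsInit ρ) (hT : IsStochastic H T)
    {P : Set (∀ k, (X k ⊕ Unit) → (A ⊕ Unit) → ℝ)} (hP : ∀ π ∈ P, IsExtPolicy π) (hπ : π ∈ P)
    (hn : n < H) {x : X n} (hx : x ∉ reachSet d ρ T μ η P n) :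
    occb ρ T π n (Sum.inl x) < η * ‖μ n x‖ := by
  cases n with
  | zero => exact absurd (Set.mem_univ x) hx
  | succ m =>
    have hbdd : BddAbove (Set.range fun π' : P => occb ρ T π'.1 (m + 1) (Sum.inl x)) :=
      ⟨1, by rintro _ ⟨π', rfl⟩; exact occb_le_one hρ hT (hP _ π'.2) hn _⟩
    rw [← norm_muExt_inl]
    exact (le_ciSup hbdd ⟨π, hπ⟩).trans_lt (not_le.1 hx)

theorem massOutside_reachSet_le (hρ : IsInit ρ) (hT : IsStochastic H T) (hμ : IsNormalized H μ)
    (hη : 0 ≤ η) (hπ : π ∈ trunc d ρ T μ η n) (hn : n < H) :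
    massOutside ρ T π n (reachSet d ρ T μ η (trunc d ρ T μ η n) n) ≤
      η * (2 * d * Real.sqrt d) := by
  cases n with
  | zero =>
    simp only [massOutside, reachSet, Set.compl_univ, Set.indicator_empty, Finset.sum_const_zero]
    positivity
  | succ m =>
    calc massOutside ρ T π (m + 1) (reachSet d ρ T μ η (trunc d ρ T μ η (m + 1)) (m + 1))
        ≤ ∑ x, η * ‖μ (m + 1) x‖ := Finset.sum_le_sum fun x _ => by
          by_cases hx : x ∈ reachSet d ρ T μ η (trunc d ρ T μ η (m + 1)) (m + 1)
          · simp only [Set.indicator_of_notMem (Set.notMem_compl_iff.2 hx)]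
            positivity
          · rw [Set.indicator_of_mem hx]
            exact (occb_lt_of_notMem_reachSet hρ hT (fun _ => isExtPolicy_of_mem_trunc) hπ hn
              hx).le
      _ = η * ∑ x, ‖μ (m + 1) x‖ := (Finset.mul_sum _ _ _).symm
      _ ≤ η * (2 * d * Real.sqrt d) := mul_le_mul_of_nonneg_left
          (EuclideanSpace.sum_norm_le_of_norm_sum_smul_le _ (hμ m (by omega))) hη

end Reachability

theorem exists_mem_trunc_valueExt_sub_le {H d : ℕ} {ρ : X 0 → ℝ} (hρ : IsInit ρ)
    {T : ∀ k, X k → A → X (k + 1) → ℝ} (hT : IsStochastic H T)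
    {μ : ∀ k, X k → EuclideanSpace ℝ (Fin d)} (hμ : IsNormalized H μ)
    {η : ℝ} (hη : 0 ≤ η) {B : ℕ → ℝ} (hB : ∀ k < H, 0 ≤ B k) {r : ∀ k, X k → A → ℝ}
    (hr : ∀ k < H, ∀ x a, |r k x a| ≤ B k) {π : ∀ k, (X k ⊕ Unit) → (A ⊕ Unit) → ℝ}
    (hπ : IsExtPolicy π) :
    ∀ {n : ℕ}, n ≤ H → ∃ π' ∈ trunc d ρ T μ η n, valueExt H ρ T r π - valueExt H ρ T r π' ≤
      n * (η * (2 * d * Real.sqrt d) * ∑ k ∈ Finset.range H, B k)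
  | 0, _ => ⟨π, hπ, by simp⟩
  | n + 1, hn => by
    obtain ⟨π', hπ', hle⟩ := exists_mem_trunc_valueExt_sub_le hρ hT hμ hη hB hr hπ (n := n)
      (by omega)
    set R := reachSet d ρ T μ η (trunc d ρ T μ η n) n
    refine ⟨truncAt n R π', by rw [trunc_succ]; exact Set.mem_image_of_mem _ hπ', ?_⟩
    have hstep := valueExt_sub_valueExt_truncAt_le (R := R) hρ hT
      (isExtPolicy_of_mem_trunc hπ') (by omega) hB hr
    have hmass := mul_le_mul_of_nonneg_right (massOutside_reachSet_le hρ hT hμ hη hπ' (by omega))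
      (Finset.sum_nonneg fun k hk => hB k (Finset.mem_range.1 hk))
    push_cast
    linarith

theorem stmt_14_general (H d : ℕ)
    (ρ : X 0 → ℝ) (hρ : IsInit ρ)
    (T : ∀ k, X k → A → X (k + 1) → ℝ)
    (hT : ∀ k, k + 2 ≤ H → ∀ (x : X k) (a : A),
      (∀ x', 0 ≤ T k x a x') ∧ (∑ x', T k x a x' = 1))
    (μ : ∀ k, X k → EuclideanSpace ℝ (Fin d))
    (hμn : ∀ k, k + 2 ≤ H → ∀ g : X (k + 1) → ℝ, (∀ x', g x' ∈ Set.Icc (0 : ℝ) 1) →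
      ‖∑ x' : X (k + 1), g x' • μ (k + 1) x'‖ ≤ Real.sqrt d)
    (η : ℝ) (hη : η ∈ Set.Ioo (0 : ℝ) 1)
    (B : ℕ → ℝ) (hB : ∀ k, k < H → 0 < B k)
    (r : ∀ k, X k → A → ℝ)
    (hr : ∀ k, k < H → ∀ (x : X k) (a : A), |r k x a| ≤ B k) :
    (⨆ π : {π | IsExtPolicy (X := X) (A := A) π}, valueExt H ρ T r π.1) -
        2 * H * (d : ℝ) ^ ((3 : ℝ) / 2) * η * ∑ k ∈ Finset.range H, B k ≤
      ⨆ π : trunc d ρ T μ η H, valueExt H ρ T r π.1 := by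
  have hB' : ∀ k < H, 0 ≤ B k := fun k hk => (hB k hk).le
  have hpow : (d : ℝ) ^ ((3 : ℝ) / 2) = d * Real.sqrt d := by
    rw [show (3 : ℝ) / 2 = 1 + 1 / 2 by norm_num, Real.rpow_add' d.cast_nonneg (by norm_num),
      Real.rpow_one, Real.sqrt_eq_rpow]
  have hbdd : BddAbove (Set.range fun π : trunc d ρ T μ η H => valueExt H ρ T r π.1) :=
    ⟨_, by rintro _ ⟨π, rfl⟩; exact valueExt_le hρ hT (isExtPolicy_of_mem_trunc π.2) hB' hr⟩
  have := nonempty_isExtPolicy (X := X) (A := A)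
  rw [sub_le_iff_le_add, hpow]
  refine ciSup_le fun π => ?_
  obtain ⟨π', hπ', hle⟩ :=
    exists_mem_trunc_valueExt_sub_le hρ hT hμn hη.1.le hB' hr π.2 le_rfl
  have := le_ciSup hbdd ⟨π', hπ'⟩
  linarith

/-- (Cost of truncation; the paper's Lemma B.4.)  In a finite low-rank
MDP of dimension `d` satisfying the normalization assumptions, for reward functions
`r_k : X k × A → [-B_k, B_k]` extended by `0` to the extended MDP, the best total reward
achievable by truncated policies `Π̄_η` is within `2 H d^{3/2} η Σ_k B_k` of the best total
reward achievable by arbitrary extended policies. -/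
theorem stmt_14 (H d : ℕ) (hd : 1 ≤ d) (hH : 2 ≤ H)
    (ρ : X 0 → ℝ) (hρ : IsInit ρ)
    (T : ∀ k, X k → A → X (k + 1) → ℝ)
    (hT : ∀ k, k + 2 ≤ H → ∀ (x : X k) (a : A),
      (∀ x', 0 ≤ T k x a x') ∧ (∑ x', T k x a x' = 1))
    (φ : ∀ k, X k → A → EuclideanSpace ℝ (Fin d))
    (μ : ∀ k, X k → EuclideanSpace ℝ (Fin d))
    (hlow : ∀ k, k + 2 ≤ H → ∀ (x : X k) (a : A) (x' : X (k + 1)),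
      T k x a x' = ⟪μ (k + 1) x', φ k x a⟫)
    (hφn : ∀ k, k + 2 ≤ H → ∀ (x : X k) (a : A), ‖φ k x a‖ ≤ 1)
    (hμn : ∀ k, k + 2 ≤ H → ∀ g : X (k + 1) → ℝ, (∀ x', g x' ∈ Set.Icc (0 : ℝ) 1) →
      ‖∑ x' : X (k + 1), g x' • μ (k + 1) x'‖ ≤ Real.sqrt d)
    (η : ℝ) (hη : η ∈ Set.Ioo (0 : ℝ) 1)
    (B : ℕ → ℝ) (hB : ∀ k, k < H → 0 < B k)
    (r : ∀ k, X k → A → ℝ)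
    (hr : ∀ k, k < H → ∀ (x : X k) (a : A), |r k x a| ≤ B k) :
    (⨆ π : {π | IsExtPolicy (X := X) (A := A) π}, valueExt H ρ T r π.1) -
        2 * H * (d : ℝ) ^ ((3 : ℝ) / 2) * η * ∑ k ∈ Finset.range H, B k ≤
      ⨆ π : trunc d ρ T μ η H, valueExt H ρ T r π.1 :=
  stmt_14_general H d ρ hρ T hT μ hμn η hη B hB r hr
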